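/- arXiv:quant-ph/0106151 — 3 statements merged into one kernel-verified Lean document; each statement's English description precedes it below -/
import Mathlib

section
/- Let H, ℓ ∈ M₂(ℂ) with H Hermitian, and define L[X] = −i[H,X] + (1/2)([ℓX,ℓ†] + [ℓ,Xℓ†]). Then L[E₁₁] = 0 if and only if ℓ₂₁ = 0 and ℓ₁₂·conj(ℓ₁₁) = 2i·h₁₂. -/
/-!
For Hermitian `H`, the generator maps Hermitian matrices to Hermitian ones and is traceless, so
`L[E₁₁]` vanishes as soon as its (2,2) and (1,2) entries do. The (2,2) entry is `|ℓ₂₁|²`, and once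
`ℓ₂₁ = 0` the (1,2) entry is `i h₁₂ - conj(ℓ₁₁) ℓ₁₂ / 2`. (Lean indices are 0-based: `ℓ₂₁` is `l 1 0`.)
-/

open Matrix ComplexOrder

/-- The Lindblad generator with Hamiltonian `H` and Lindblad operator `l`. -/
noncomputable def lindblad (H l X : Matrix (Fin 2) (Fin 2) ℂ) : Matrix (Fin 2) (Fin 2) ℂ :=
  (-Complex.I) • (H * X - X * H) +
    (2⁻¹ : ℂ) • ((l * X * lᴴ - lᴴ * (l * X)) + (l * (X * lᴴ) - X * lᴴ * l))

open Complex ComplexConjugate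

theorem Matrix.isHermitian_single_self {n α : Type*} [DecidableEq n] [AddMonoid α]
    [StarAddMonoid α] (i : n) {a : α} (ha : IsSelfAdjoint a) : (single i i a).IsHermitian := by
  ext j k
  simp only [conjTranspose_apply, single_apply]
  split_ifs <;> grind [IsSelfAdjoint, star_zero]

theorem isHermitian_lindblad {H : Matrix (Fin 2) (Fin 2) ℂ} (hH : H.IsHermitian)
    (l : Matrix (Fin 2) (Fin 2) ℂ) {X : Matrix (Fin 2) (Fin 2) ℂ} (hX : X.IsHermitian) :
    (lindblad H l X).IsHermitian := by
  simp only [IsHermitian, lindblad, conjTranspose_add, conjTranspose_smul, conjTranspose_sub,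
    conjTranspose_mul, conjTranspose_conjTranspose, hH.eq, hX.eq, star_neg, conj_I,
    RCLike.star_def, map_inv₀, map_ofNat, Matrix.mul_assoc]
  module

theorem trace_lindblad (H l X : Matrix (Fin 2) (Fin 2) ℂ) : (lindblad H l X).trace = 0 := by
  rw [lindblad, trace_add, trace_smul, trace_smul, trace_sub, trace_add, trace_sub, trace_sub,
    trace_mul_comm H X, trace_mul_comm (l * X), trace_mul_comm l (X * lᴴ)]
  simp only [sub_self, smul_zero, add_zero]

section
variable (H l : Matrix (Fin 2) (Fin 2) ℂ)

theorem lindblad_single_zero_zero_apply_one_one :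
    lindblad H l (single 0 0 1) 1 1 = (normSq (l 1 0) : ℂ) := by
  rw [← mul_conj]
  simp only [lindblad, Matrix.add_apply, Matrix.smul_apply, Matrix.sub_apply, mul_apply,
    Fin.sum_univ_two, conjTranspose_apply, single_apply_same, single_apply_of_row_ne zero_ne_one,
    single_apply_of_col_ne _ _ zero_ne_one, smul_eq_mul, RCLike.star_def]
  ring

theorem lindblad_single_zero_zero_apply_zero_one :
    lindblad H l (single 0 0 1) 0 1 =
      I * H 0 1 + l 0 0 * conj (l 1 0) - 2⁻¹ * (conj (l 0 0) * l 0 1 + conj (l 1 0) * l 1 1) := by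
  simp only [lindblad, Matrix.add_apply, Matrix.smul_apply, Matrix.sub_apply, mul_apply,
    Fin.sum_univ_two, conjTranspose_apply, single_apply_same, single_apply_of_row_ne zero_ne_one,
    single_apply_of_col_ne _ _ zero_ne_one, smul_eq_mul, RCLike.star_def]
  ring

end

theorem stmt_9 (H l : Matrix (Fin 2) (Fin 2) ℂ) (hH : H.IsHermitian) :
    lindblad H l (Matrix.single 0 0 (1 : ℂ)) = 0 ↔
      l 1 0 = 0 ∧ l 0 1 * (starRingEnd ℂ) (l 0 0) = 2 * Complex.I * H 0 1 := by
  have hHerm := isHermitian_lindblad hH l (isHermitian_single_self 0 (.one ℂ))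
  have htrace := trace_lindblad H l (single 0 0 1)
  rw [trace_fin_two] at htrace
  rw [← Matrix.ext_iff]
  simp only [Fin.forall_fin_two, Matrix.zero_apply, ← hHerm.apply 1 0, star_eq_zero,
    eq_neg_of_add_eq_zero_left htrace, neg_eq_zero, lindblad_single_zero_zero_apply_one_one,
    ofReal_eq_zero, normSq_eq_zero]
  rw [show ∀ p q : Prop, (p ∧ q) ∧ q ∧ p ↔ p ∧ q by tauto]
  refine and_congr_right fun hl => ?_
  simp only [lindblad_single_zero_zero_apply_zero_one, hl, map_zero, mul_zero, zero_mul, add_zero]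
  constructor <;> intro h
  · linear_combination -2 * h
  · linear_combination -2⁻¹ * h
end

section
/- Let H, ℓ ∈ M₂(ℂ) with H Hermitian, and define L[X] = −i[H,X] + (1/2)([ℓX,ℓ†] + [ℓ,Xℓ†]). Then L[E₂₂] = 0 if and only if ℓ₁₂ = 0 and ℓ₂₁·conj(ℓ₂₂) = 2i·h₂₁. -/
/-!
Since `L` maps Hermitian matrices to Hermitian matrices, `L[E₂₂] = 0` amounts to the vanishing of
the two diagonal entries and the lower-left entry of `L[E₂₂]`. The diagonal entries are `±|ℓ₁₂|²`,
which forces `ℓ₁₂ = 0`; the lower-left entry then reduces to `i h₂₁ - ½ ℓ₂₁ conj(ℓ₂₂)`.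
-/

open Matrix ComplexOrder
theorem Matrix.IsHermitian.eq_zero_iff_fin_two {α : Type*} [AddMonoid α] [StarAddMonoid α]
    {A : Matrix (Fin 2) (Fin 2) α} (hA : A.IsHermitian) :
    A = 0 ↔ A 0 0 = 0 ∧ A 1 1 = 0 ∧ A 1 0 = 0 := by
  refine ⟨fun h => by simp [h], fun ⟨h00, h11, h10⟩ => ?_⟩
  have h01 : A 0 1 = 0 := by rw [← hA.apply 0 1, h10, star_zero]
  ext i j
  fin_cases i <;> fin_cases j <;> assumption

theorem Matrix.IsHermitian.lindblad {H X : Matrix (Fin 2) (Fin 2) ℂ} (hH : H.IsHermitian)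
    (hX : X.IsHermitian) (l : Matrix (Fin 2) (Fin 2) ℂ) : (lindblad H l X).IsHermitian := by
  simp only [IsHermitian, _root_.lindblad, conjTranspose_add, conjTranspose_smul,
    conjTranspose_sub, conjTranspose_mul, conjTranspose_conjTranspose, hH.eq, hX.eq, star_neg,
    Complex.star_def, Complex.conj_I, map_inv₀, map_ofNat, neg_neg, smul_sub]
  module

section EntriesOfLindbladSingle

variable (H l : Matrix (Fin 2) (Fin 2) ℂ)

theorem lindblad_single_one_one_apply_zero_zero :
    lindblad H l (single 1 1 1) 0 0 = Complex.normSq (l 0 1) := by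
  simp only [lindblad, Matrix.add_apply, Matrix.smul_apply, Matrix.sub_apply, mul_apply,
    Fin.sum_univ_two, conjTranspose_apply, single_apply, smul_eq_mul, RCLike.star_def, and_true,
    true_and, and_false, false_and, one_ne_zero, if_true, if_false,
    Complex.normSq_eq_conj_mul_self]
  ring

theorem lindblad_single_one_one_apply_one_one :
    lindblad H l (single 1 1 1) 1 1 = -Complex.normSq (l 0 1) := by
  simp only [lindblad, Matrix.add_apply, Matrix.smul_apply, Matrix.sub_apply, mul_apply,
    Fin.sum_univ_two, conjTranspose_apply, single_apply, smul_eq_mul, RCLike.star_def, and_true,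
    true_and, and_false, false_and, one_ne_zero, if_true, if_false,
    Complex.normSq_eq_conj_mul_self]
  ring

theorem lindblad_single_one_one_apply_one_zero :
    lindblad H l (single 1 1 1) 1 0 = Complex.I * H 1 0 + l 1 1 * starRingEnd ℂ (l 0 1) -
      2⁻¹ * (starRingEnd ℂ (l 0 1) * l 0 0 + starRingEnd ℂ (l 1 1) * l 1 0) := by
  simp only [lindblad, Matrix.add_apply, Matrix.smul_apply, Matrix.sub_apply, mul_apply,
    Fin.sum_univ_two, conjTranspose_apply, single_apply, smul_eq_mul, RCLike.star_def, and_true,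
    true_and, and_false, false_and, one_ne_zero, if_true, if_false]
  ring

end EntriesOfLindbladSingle

theorem stmt_10 (H l : Matrix (Fin 2) (Fin 2) ℂ) (hH : H.IsHermitian) :
    lindblad H l (Matrix.single 1 1 (1 : ℂ)) = 0 ↔
      l 0 1 = 0 ∧ l 1 0 * (starRingEnd ℂ) (l 1 1) = 2 * Complex.I * H 1 0 := by
  have hE : (single (1 : Fin 2) 1 (1 : ℂ)).IsHermitian := by simp [IsHermitian]
  rw [(hH.lindblad hE l).eq_zero_iff_fin_two, lindblad_single_one_one_apply_zero_zero,
    lindblad_single_one_one_apply_one_one, lindblad_single_one_one_apply_one_zero, neg_eq_zero,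
    and_self_left, Complex.ofReal_eq_zero, Complex.normSq_eq_zero]
  refine and_congr_right fun h01 => ?_
  rw [h01, map_zero]
  exact ⟨fun h => by linear_combination (-2) * h, fun h => by linear_combination (-2⁻¹) * h⟩
end

section
/- With M as in the Jaynes–Cummings block (entries M₁₁ = ω₀/2 + nω, M₁₂ = M₂₁ = ε√(n+1), M₂₂ = −ω₀/2 + (n+1)ω, ε ≠ 0), let θ satisfy tan θ = ((ω−ω₀)/2 + √(((ω−ω₀)/2)² + (n+1)ε²)) / (ε√(n+1)). Then the unit vector (cos θ, sin θ) is an eigenvector of M with eigenvalue E⁺ = (n+1/2)ω + √(((ω−ω₀)/2)² + (n+1)ε²), and (−sin θ, cos θ) is an eigenvector with eigenvalue E⁻ = (n+1/2)ω − √(((ω−ω₀)/2)² + (n+1)ε²); in particular these two vectors form an orthonormal basis of ℝ². -/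
/-!
Write the block as `!![m - Δ, b; b, m + Δ]` with `m = (n + 1/2) ω`, `Δ = (ω - ω₀)/2` and
`b = ε √(n+1)`, and put `R = √(Δ² + b²)`. Since `b ≠ 0` we have `|Δ| < R`, so `tan θ = (Δ + R)/b`
is nonzero, `cos θ ≠ 0`, and `b sin θ = (Δ + R) cos θ`. Multiplying by `R - Δ` and using
`R² - Δ² = b²` gives the companion relation `b cos θ = (R - Δ) sin θ`. These two relations are
exactly the eigenvalue equations for `m ± R`, row by row.
-/

open Matrix ComplexOrder

namespace Real

lemma abs_lt_sqrt_sq_add_sq (Δ : ℝ) {b : ℝ} (hb : b ≠ 0) : |Δ| < √(Δ ^ 2 + b ^ 2) :=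
  lt_sqrt_of_sq_lt <| by rw [sq_abs]; linarith [sq_pos_of_ne_zero hb]

variable {Δ b θ : ℝ}

lemma mul_sin_eq_of_tan_eq (hb : b ≠ 0) (hθ : tan θ = (Δ + √(Δ ^ 2 + b ^ 2)) / b) :
    b * sin θ = (Δ + √(Δ ^ 2 + b ^ 2)) * cos θ := by
  have hR : 0 < Δ + √(Δ ^ 2 + b ^ 2) := by
    linarith [neg_abs_le Δ, abs_lt_sqrt_sq_add_sq Δ hb]
  have hcos : cos θ ≠ 0 := by
    intro h
    rw [tan_eq_sin_div_cos, h, div_zero, eq_comm, div_eq_zero_iff] at hθ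
    exact hθ.elim hR.ne' hb
  rw [tan_eq_sin_div_cos, div_eq_div_iff hcos hb] at hθ
  linarith

lemma mul_cos_eq_of_tan_eq (hb : b ≠ 0) (hθ : tan θ = (Δ + √(Δ ^ 2 + b ^ 2)) / b) :
    b * cos θ = (√(Δ ^ 2 + b ^ 2) - Δ) * sin θ := by
  have hR2 : √(Δ ^ 2 + b ^ 2) ^ 2 = Δ ^ 2 + b ^ 2 := sq_sqrt (by positivity)
  have hsin := mul_sin_eq_of_tan_eq hb hθ
  refine mul_left_cancel₀ hb ?_
  linear_combination -(√(Δ ^ 2 + b ^ 2) - Δ) * hsin - cos θ * hR2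

end Real

open Real

section RotatedEigenbasis

variable {m Δ b θ : ℝ}

lemma mulVec_cos_sin_of_tan_eq (hb : b ≠ 0) (hθ : tan θ = (Δ + √(Δ ^ 2 + b ^ 2)) / b) :
    !![m - Δ, b; b, m + Δ] *ᵥ ![cos θ, sin θ] = (m + √(Δ ^ 2 + b ^ 2)) • ![cos θ, sin θ] := by
  have hsin := mul_sin_eq_of_tan_eq hb hθ
  have hcos := mul_cos_eq_of_tan_eq hb hθ
  ext i
  fin_cases i <;>
    simp only [mulVec, dotProduct, Fin.sum_univ_two, Fin.zero_eta, Fin.mk_one, Fin.isValue,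
      of_apply, cons_val', cons_val_fin_one, cons_val_zero, cons_val_one, Pi.smul_apply, smul_eq_mul]
  · linear_combination hsin
  · linear_combination hcos

lemma mulVec_neg_sin_cos_of_tan_eq (hb : b ≠ 0) (hθ : tan θ = (Δ + √(Δ ^ 2 + b ^ 2)) / b) :
    !![m - Δ, b; b, m + Δ] *ᵥ ![-sin θ, cos θ] =
      (m - √(Δ ^ 2 + b ^ 2)) • ![-sin θ, cos θ] := by
  have hsin := mul_sin_eq_of_tan_eq hb hθ
  have hcos := mul_cos_eq_of_tan_eq hb hθ
  ext i
  fin_cases i <;>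
    simp only [mulVec, dotProduct, Fin.sum_univ_two, Fin.zero_eta, Fin.mk_one, Fin.isValue,
      of_apply, cons_val', cons_val_fin_one, cons_val_zero, cons_val_one, Pi.smul_apply, smul_eq_mul]
  · linear_combination hcos
  · linear_combination -hsin

end RotatedEigenbasis

lemma cos_sin_orthonormal (θ : ℝ) :
    ![cos θ, sin θ] ⬝ᵥ ![cos θ, sin θ] = 1 ∧
    ![-sin θ, cos θ] ⬝ᵥ ![-sin θ, cos θ] = 1 ∧
    ![cos θ, sin θ] ⬝ᵥ ![-sin θ, cos θ] = 0 := by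
  simp only [dotProduct, Fin.sum_univ_two, cons_val_zero, cons_val_one]
  exact ⟨by linear_combination cos_sq_add_sin_sq θ, by linear_combination sin_sq_add_cos_sq θ,
    by ring⟩

theorem stmt_16 (ω₀ ω ε : ℝ) (hε : ε ≠ 0) (n : ℕ) (θ : ℝ)
    (hθ : Real.tan θ =
      ((ω - ω₀) / 2 + Real.sqrt (((ω - ω₀) / 2) ^ 2 + (n + 1) * ε ^ 2)) /
        (ε * Real.sqrt (n + 1)))
    (M : Matrix (Fin 2) (Fin 2) ℝ)
    (hM : M = !![ω₀ / 2 + n * ω, ε * Real.sqrt (n + 1);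
                 ε * Real.sqrt (n + 1), -ω₀ / 2 + (n + 1) * ω]) :
    M *ᵥ ![Real.cos θ, Real.sin θ] =
        ((n + 1 / 2) * ω + Real.sqrt (((ω - ω₀) / 2) ^ 2 + (n + 1) * ε ^ 2)) •
          ![Real.cos θ, Real.sin θ] ∧
    M *ᵥ ![-Real.sin θ, Real.cos θ] =
        ((n + 1 / 2) * ω - Real.sqrt (((ω - ω₀) / 2) ^ 2 + (n + 1) * ε ^ 2)) •
          ![-Real.sin θ, Real.cos θ] ∧
    ![Real.cos θ, Real.sin θ] ⬝ᵥ ![Real.cos θ, Real.sin θ] = 1 ∧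
    ![-Real.sin θ, Real.cos θ] ⬝ᵥ ![-Real.sin θ, Real.cos θ] = 1 ∧
    ![Real.cos θ, Real.sin θ] ⬝ᵥ ![-Real.sin θ, Real.cos θ] = 0 := by
  have hb : ε * √(n + 1) ≠ 0 := mul_ne_zero hε (sqrt_pos.mpr (by positivity)).ne'
  have hb2 : (n + 1) * ε ^ 2 = (ε * √(n + 1)) ^ 2 := by
    rw [mul_pow, sq_sqrt (by positivity)]; ring
  have hM' : M = !![(n + 1 / 2) * ω - (ω - ω₀) / 2, ε * √(n + 1);
      ε * √(n + 1), (n + 1 / 2) * ω + (ω - ω₀) / 2] := by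
    rw [hM]
    ext i j
    fin_cases i <;> fin_cases j <;>
      simp only [Fin.zero_eta, Fin.mk_one, Fin.isValue, of_apply, cons_val', cons_val_zero,
        cons_val_one, cons_val_fin_one] <;> ring
  rw [hb2] at hθ ⊢
  rw [hM']
  exact ⟨mulVec_cos_sin_of_tan_eq hb hθ, mulVec_neg_sin_cos_of_tan_eq hb hθ,
    cos_sin_orthonormal θ⟩
end
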